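/- Let a = (a₁,…,a_r) ∈ ℤ^r be a nonzero vector. Then the set H = {λ ∈ (ℂ*)^r : λ₁^{a₁} ⋯ λ_r^{a_r} = 1} is a closed subgroup of (ℂ*)^r, and the torsion points of (ℂ*)^r lying in H are dense in H for the Zariski topology. -/

import Mathlib

/-!
Let `T` be the group of torsion points of `H = ker χ_a`, where `χ_m x = ∏ xᵢ ^ mᵢ`. On `T` a
Laurent polynomial `∑ c_d t^d` is a combination of the characters `χ_d|_T`; grouping its monomials
by these restrictions, Artin's independence of characters makes the coefficient sum of every group
vanish. So it suffices that monomials with equal restrictions to `T` agree on `H`. If `χ_m` is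
trivial on `T`, evaluating it at the points `(ζ ^ vᵢ)ᵢ`, `ζ` a primitive `n`-th root of unity,
gives `n ∣ m ⬝ᵥ v` whenever `n ∣ a ⬝ᵥ v`; this forces `m = k • a`, hence `χ_m = χ_a ^ k` is
trivial on `H`.
-/

/-- The ring of Laurent polynomials `ℂ[t₁^{±1}, …, t_r^{±1}]` in `r` variables. -/
abbrev LaurentRing (r : ℕ) : Type := AddMonoidAlgebra ℂ (Fin r →₀ ℤ)

/-- Evaluation of a Laurent polynomial at a point of the torus `(ℂ*)^r`. -/
noncomputable def lEval {r : ℕ} (x : Fin r → ℂˣ) (f : LaurentRing r) : ℂ :=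
  f.coeff.sum fun d c => c * ∏ i, ((x i : ℂ) ^ (d i))

open Finset

section MonomialChar

variable {ι G : Type*} [Fintype ι] [CommGroup G]

@[simps]
def monomialChar (m : ι → ℤ) : (ι → G) →* G where
  toFun x := ∏ i, x i ^ m i
  map_one' := by simp
  map_mul' x y := by simp [mul_zpow, prod_mul_distrib]

lemma monomialChar_sub (m n : ι → ℤ) (x : ι → G) :
    monomialChar (m - n) x = monomialChar m x / monomialChar n x := by
  simp [zpow_sub, prod_mul_distrib, div_eq_mul_inv]

lemma monomialChar_smul (k : ℤ) (m : ι → ℤ) (x : ι → G) :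
    monomialChar (k • m) x = monomialChar m x ^ k := by
  simp [← prod_zpow, ← zpow_mul, mul_comm]

lemma monomialChar_zpow_apply (m v : ι → ℤ) (g : G) :
    monomialChar m (fun i => g ^ v i) = g ^ (m ⬝ᵥ v) := by
  simp only [monomialChar_apply, ← zpow_mul, dotProduct]
  induction (univ : Finset ι) using Finset.cons_induction with
  | empty => simp
  | cons i s _ ih => rw [prod_cons, sum_cons, ih, zpow_add, mul_comm (v i)]

def kerTorsion (a : ι → ℤ) : Subgroup (ι → G) :=
  (monomialChar a).ker ⊓ Subgroup.pi Set.univ fun _ => CommGroup.torsion G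

lemma mem_kerTorsion {a : ι → ℤ} {x : ι → G} :
    x ∈ kerTorsion a ↔ monomialChar a x = 1 ∧ ∀ i, IsOfFinOrder (x i) := by
  simp [kerTorsion, Subgroup.mem_pi, CommGroup.mem_torsion]

theorem exists_eq_smul_of_forall_dvd_dotProduct {a m : ι → ℤ} (ha : a ≠ 0)
    (h : ∀ n : ℕ, 0 < n → ∀ v : ι → ℤ, (n : ℤ) ∣ a ⬝ᵥ v → (n : ℤ) ∣ m ⬝ᵥ v) :
    ∃ k : ℤ, m = k • a := by
  classical
  have hker (v : ι → ℤ) (hv : a ⬝ᵥ v = 0) : m ⬝ᵥ v = 0 :=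
    Int.eq_zero_of_dvd_of_natAbs_lt_natAbs
      (h ((m ⬝ᵥ v).natAbs + 1) (Nat.succ_pos _) v (by simp [hv])) (by omega)
  -- Test against `e_j`, where `a_j ≠ 0`, and against `a_j e_i - a_i e_j`, orthogonal to `a`.
  obtain ⟨j, hj⟩ := Function.ne_iff.mp ha
  obtain ⟨k, hk⟩ : a j ∣ m j := by
    simpa [dotProduct_single] using
      h (a j).natAbs (Int.natAbs_pos.mpr hj) (Pi.single j 1) (by simp [dotProduct_single])
  refine ⟨k, funext fun i => mul_right_cancel₀ hj ?_⟩
  have := hker (a j • Pi.single i 1 - a i • Pi.single j 1) (by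
    simp only [dotProduct_sub, dotProduct_smul, dotProduct_single, smul_eq_mul]; ring)
  simp only [dotProduct_sub, dotProduct_smul, dotProduct_single, smul_eq_mul, hk] at this
  simp only [Pi.smul_apply, smul_eq_mul]
  linear_combination this

theorem exists_eq_smul_of_kerTorsion_le_ker (hG : ∀ n : ℕ, 0 < n → ∃ ζ : G, IsPrimitiveRoot ζ n)
    {a m : ι → ℤ} (ha : a ≠ 0)
    (h : (kerTorsion a : Subgroup (ι → G)) ≤ (monomialChar m).ker) :
    ∃ k : ℤ, m = k • a := by
  refine exists_eq_smul_of_forall_dvd_dotProduct ha fun n hn v hv => ?_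
  obtain ⟨ζ, hζ⟩ := hG n hn
  have hmem : (fun i => ζ ^ v i) ∈ kerTorsion a :=
    mem_kerTorsion.mpr ⟨by rwa [monomialChar_zpow_apply, hζ.zpow_eq_one_iff_dvd],
      fun _ => (hζ.isOfFinOrder hn.ne').zpow⟩
  rw [← hζ.zpow_eq_one_iff_dvd, ← monomialChar_zpow_apply]
  exact h hmem

theorem monomialChar_eq_of_eqOn_kerTorsion (hG : ∀ n : ℕ, 0 < n → ∃ ζ : G, IsPrimitiveRoot ζ n)
    {a m n : ι → ℤ} (ha : a ≠ 0)
    (h : ∀ t : ι → G, t ∈ kerTorsion a → monomialChar m t = monomialChar n t)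
    {x : ι → G} (hx : monomialChar a x = 1) : monomialChar m x = monomialChar n x := by
  obtain ⟨k, hk⟩ := exists_eq_smul_of_kerTorsion_le_ker hG ha (m := m - n) fun t ht => by
    rw [MonoidHom.mem_ker, monomialChar_sub, h t ht, div_self']
  rw [← div_eq_one, ← monomialChar_sub, hk, monomialChar_smul, hx, one_zpow]

end MonomialChar

theorem sum_mul_eq_zero_of_eqOn_submonoid {G K ι : Type*} [Monoid G] [CommRing K] [IsDomain K]
    (T : Submonoid G) (χ : ι → G →* K) {x : G}
    (hχ : ∀ i j, (∀ t ∈ T, χ i t = χ j t) → χ i x = χ j x)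
    (s : Finset ι) (c : ι → K) (hT : ∀ t ∈ T, ∑ i ∈ s, c i * χ i t = 0) :
    ∑ i ∈ s, c i * χ i x = 0 := by
  classical
  let ρ (i : ι) : T →* K := (χ i).comp T.subtype
  let b (ψ : T →* K) : K := ∑ i ∈ s with ρ i = ψ, c i
  have hfiber (g : ι → K) (hg : ∀ i j, ρ i = ρ j → g i = g j) (i : ι) :
      ∑ j ∈ s with ρ j = ρ i, c j * g j = b (ρ i) * g i := by
    rw [sum_mul]
    exact sum_congr rfl fun j hj => by rw [hg j i (mem_filter.mp hj).2]
  have hb : ∀ ψ ∈ s.image ρ, b ψ = 0 := by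
    refine linearIndependent_iff'.mp (linearIndependent_monoidHom T K) _ b (funext fun t => ?_)
    simp only [Finset.sum_apply, Pi.smul_apply, smul_eq_mul, Pi.zero_apply]
    rw [sum_image' (fun i => c i * χ i t) fun i _ => (hfiber (fun j => χ j t)
      (fun j k hjk => DFunLike.congr_fun hjk t) i).symm]
    exact hT t t.2
  rw [← sum_fiberwise_of_maps_to (fun i hi => mem_image_of_mem ρ hi)]
  refine sum_eq_zero fun ψ hψ => ?_
  obtain ⟨i, -, rfl⟩ := mem_image.mp hψ
  rw [hfiber (fun j => χ j x) (fun j k hjk => hχ j k fun t ht => DFunLike.congr_fun hjk ⟨t, ht⟩) i,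
    hb _ hψ, zero_mul]

lemma Complex.exists_isPrimitiveRoot_units (n : ℕ) (hn : 0 < n) : ∃ ζ : ℂˣ, IsPrimitiveRoot ζ n :=
  ⟨_, (Complex.isPrimitiveRoot_exp n hn.ne').isUnit_unit hn.ne'⟩

section Laurent

variable {r : ℕ} (x : Fin r → ℂˣ)

lemma lEval_eq_sum (f : LaurentRing r) :
    lEval x f = ∑ d ∈ f.coeff.support, f.coeff d * ((monomialChar (⇑d) x : ℂˣ) : ℂ) := by
  simp [lEval, Finsupp.sum, Units.val_zpow_eq_zpow_val]

lemma lEval_single (d : Fin r →₀ ℤ) (c : ℂ) :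
    lEval x (AddMonoidAlgebra.single d c) = c * ((monomialChar (⇑d) x : ℂˣ) : ℂ) := by
  simp [lEval, Units.val_zpow_eq_zpow_val]

lemma lEval_sub (f g : LaurentRing r) : lEval x (f - g) = lEval x f - lEval x g := by
  simp only [lEval, AddMonoidAlgebra.coeff_sub]
  rw [Finsupp.sum_sub_index]
  intros; ring

end Laurent

/-- Let `a = (a₁,…,a_r) ∈ ℤ^r` be nonzero. Then
`H = {λ ∈ (ℂ*)^r : λ₁^{a₁} ⋯ λ_r^{a_r} = 1}` is a closed subgroup of `(ℂ*)^r`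
(a subgroup which is the zero locus of a Laurent polynomial), and the torsion points
of `(ℂ*)^r` lying in `H` are Zariski-dense in `H`: every Laurent polynomial vanishing
on the torsion points of `H` vanishes on all of `H`. -/
theorem character_kernel_subgroup_torsion_dense (r : ℕ) (a : Fin r → ℤ) (ha : a ≠ 0) :
    (∃ S : Subgroup (Fin r → ℂˣ), (S : Set (Fin r → ℂˣ)) =
        {x : Fin r → ℂˣ | ∏ i, x i ^ a i = 1}) ∧
    (∃ g : LaurentRing r, {x : Fin r → ℂˣ | ∏ i, x i ^ a i = 1} =
        {x : Fin r → ℂˣ | lEval x g = 0}) ∧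
    (∀ f : LaurentRing r,
      (∀ x : Fin r → ℂˣ, (∏ i, x i ^ a i = 1) → (∀ i, IsOfFinOrder (x i)) →
        lEval x f = 0) →
      ∀ x : Fin r → ℂˣ, (∏ i, x i ^ a i = 1) → lEval x f = 0) := by
  refine ⟨⟨(monomialChar a).ker, rfl⟩,
    ⟨AddMonoidAlgebra.single (Finsupp.equivFunOnFinite.symm a) 1 - AddMonoidAlgebra.single 0 1,
      ?_⟩, fun f hf x hx => ?_⟩
  · ext x
    simp [lEval_sub, lEval_single, sub_eq_zero, ← Units.val_eq_one, Units.val_zpow_eq_zpow_val]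
  · rw [lEval_eq_sum]
    refine sum_mul_eq_zero_of_eqOn_submonoid (kerTorsion a).toSubmonoid
      (fun d : Fin r →₀ ℤ => (Units.coeHom ℂ).comp (monomialChar ⇑d)) ?_ _ _ ?_
    · intro d e hde
      exact congrArg Units.val <| monomialChar_eq_of_eqOn_kerTorsion
        Complex.exists_isPrimitiveRoot_units ha (fun t ht => Units.ext (hde t ht)) hx
    · intro t ht
      obtain ⟨htH, htT⟩ := mem_kerTorsion.mp ht
      exact (lEval_eq_sum t f).symm.trans (hf t htH htT)
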